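/- (Existence of cubes with negligible frames.) Let μ be a Radon measure on ℝ^N, K compact with μ(K) > 0, and U ⊇ K open with μ(U) ≤ (3/2)μ(K). Let r > 0 be such that every cube Bx(x,r) of side length 2r intersecting K is contained in U. Fix ε > 0. For ω ∈ Bx(0,r), shift the standard cubulation by cubes of side 2r by ω, and call a cube Bx(x,r) in the shifted cubulation 'good' if it meets K and μ(Fr(x,r,ε)) ≤ 16N·2^N·ε·μ(Bx(x,r)), where Fr(x,r,ε) = {y ∈ Bx(x,r) : |x_i − y_i| ≥ (1−ε)r for some i}. Then there exists ω ∈ Bx(0,r) such that the union of good cubes covers at least 3/4 of the measure of K, i.e. μ(K ∩ ⋃ good cubes) ≥ (3/4)μ(K). -/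

import Mathlib

open MeasureTheory

/-- The closed cube of center `x` and half-side `r`. -/
def Bx {N : ℕ} (x : Fin N → ℝ) (r : ℝ) : Set (Fin N → ℝ) :=
  {y | ∀ i, |x i - y i| ≤ r}

/-- The `ε`-frame of the cube `Bx x r`. -/
def Fr {N : ℕ} (x : Fin N → ℝ) (r ε : ℝ) : Set (Fin N → ℝ) :=
  {y ∈ Bx x r | ∃ i, (1 - ε) * r ≤ |x i - y i|}

/-! Average over the `m^N` shifts `ω_κ = 2rκ/m - r`, `κ ∈ {0, …, m-1}^N`, where `m = ⌈1/ε⌉`.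
Together their cubes are exactly the cubes centred on the finer lattice `(2r/m)ℤ^N - r`, and
since `εr < 2r/m`, each coordinate of a point sees at most two of these centres at distance in
`[(1-ε)r, r]`; so every point lies in at most `2N(m+1)^(N-1)` of their frames. Integrating over `U`,
which contains every cube meeting `K`, some shift has total frame mass at most
`2N(m+1)^(N-1) μ(U) / m^N`. A bad cube of that shift has frame mass larger than `16N2^Nε` times
its measure; as `mε ≥ 1` and `μ(U) ≤ 3μ(K)/2`, the bad cubes cover at most `μ(K)/4`, and the rest of `K` lies in good cubes. -/

open scoped ENNReal

lemma measurableSet_Bx {N : ℕ} (x : Fin N → ℝ) (r : ℝ) : MeasurableSet (Bx x r) := by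
  simp only [Bx, Set.ofPred_forall]
  exact MeasurableSet.iInter fun i => measurableSet_le (by fun_prop) (by fun_prop)

lemma measurableSet_Fr {N : ℕ} (x : Fin N → ℝ) (r ε : ℝ) : MeasurableSet (Fr x r ε) := by
  simp only [Fr, Set.ofPred_and, Set.ofPred_exists]
  exact (measurableSet_Bx x r).inter
    (MeasurableSet.iUnion fun i => measurableSet_le (by fun_prop) (by fun_prop))

def cubeCenter {N : ℕ} (r : ℝ) (ω : Fin N → ℝ) (n : Fin N → ℤ) : Fin N → ℝ :=
  fun i => 2 * r * n i + ω i

lemma exists_mem_Bx_cubeCenter {N : ℕ} {r : ℝ} (hr : 0 < r) (ω y : Fin N → ℝ) :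
    ∃ n, y ∈ Bx (cubeCenter r ω n) r := by
  refine ⟨fun i => round ((y i - ω i) / (2 * r)), fun i => ?_⟩
  set t := (y i - ω i) / (2 * r)
  have hdist : cubeCenter r ω (fun i => round ((y i - ω i) / (2 * r))) i - y i =
      -(2 * r * (t - round t)) := by
    simp only [cubeCenter, t]; field_simp; ring
  rw [hdist, abs_neg, abs_mul, abs_of_pos (by positivity)]
  nlinarith [abs_sub_round t]

lemma Int.mem_Icc_ceil_div_floor_div {h a b : ℝ} (hh : 0 < h) {j : ℤ} :
    j ∈ Finset.Icc ⌈a / h⌉ ⌊b / h⌋ ↔ a ≤ h * j ∧ h * j ≤ b := by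
  rw [Finset.mem_Icc, Int.ceil_le, Int.le_floor, div_le_iff₀ hh, le_div_iff₀ hh, mul_comm]

lemma Int.card_Icc_ceil_floor_le {a b : ℝ} (hab : a ≤ b + 1) :
    ((Finset.Icc ⌈a⌉ ⌊b⌋).card : ℝ) ≤ b - a + 1 := by
  rw [Int.card_Icc]
  rcases le_or_gt 0 (⌊b⌋ + 1 - ⌈a⌉) with h | h
  · rw [← Int.cast_natCast, Int.toNat_of_nonneg h]
    push_cast
    linarith [Int.floor_le b, Int.le_ceil a]
  · rw [Int.toNat_of_nonpos h.le, Nat.cast_zero]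
    linarith

/-- An interval of length `εr < h` contains at most one point of `hℤ`: the first one after its
left end, or the last one before its right end. -/
lemma eq_ceil_or_eq_floor_of_frame {h r ε z : ℝ} (hh : 0 < h) (hεh : ε * r < h) {j : ℤ}
    (hj : |h * j - z| ≤ r) (hjε : (1 - ε) * r ≤ |h * j - z|) :
    j = ⌈(z - r) / h⌉ ∨ j = ⌊(z + r) / h⌋ := by
  rcases le_total 0 (h * j - z) with hpos | hneg
  · right
    rw [abs_of_nonneg hpos] at hj hjε
    have hle : j ≤ ⌊(z + r) / h⌋ := Int.le_floor.mpr (by rw [le_div_iff₀ hh]; linarith)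
    by_contra hne
    have hlt : (j : ℝ) + 1 ≤ ⌊(z + r) / h⌋ := by exact_mod_cast lt_of_le_of_ne hle hne
    have := (le_div_iff₀ hh).mp (hlt.trans (Int.floor_le _))
    nlinarith
  · left
    rw [abs_of_nonpos hneg] at hj hjε
    have hle : ⌈(z - r) / h⌉ ≤ j := Int.ceil_le.mpr (by rw [div_le_iff₀ hh]; linarith)
    by_contra hne
    have hlt : (⌈(z - r) / h⌉ : ℝ) + 1 ≤ j := by exact_mod_cast lt_of_le_of_ne hle (Ne.symm hne)
    have := (div_le_iff₀ hh).mp ((Int.le_ceil _).trans (by linarith : (⌈(z - r) / h⌉ : ℝ) ≤ j - 1))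
    nlinarith

lemma exists_finset_frame_multiplicity {N m : ℕ} {r ε : ℝ} (hr : 0 < r) (hm : 0 < m)
    (hmε : m * ε < 2) (a y : Fin N → ℝ) :
    ∃ s : Finset (Fin N → ℤ), s.card ≤ 2 * N * (m + 1) ^ (N - 1) ∧
      ∀ j, y ∈ Fr (fun i => 2 * r / m * j i + a i) r ε → j ∈ s := by
  classical
  set h := 2 * r / m
  have hh : 0 < h := by positivity
  have hεh : ε * r < h := by
    rw [lt_div_iff₀ (by positivity)]; nlinarith
  set z := fun i => y i - a i
  let J : Fin N → Finset ℤ := fun i => Finset.Icc ⌈(z i - r) / h⌉ ⌊(z i + r) / h⌋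
  let F : Fin N → Finset ℤ := fun i => {⌈(z i - r) / h⌉, ⌊(z i + r) / h⌋}
  have hJ : ∀ i, (J i).card ≤ m + 1 := fun i => by
    have hlen : (z i + r) / h - (z i - r) / h = m := by
      simp only [h]; field_simp; ring
    have hcard := Int.card_Icc_ceil_floor_le (a := (z i - r) / h) (b := (z i + r) / h)
      (by linarith [(by positivity : (0 : ℝ) ≤ m)])
    rw [hlen] at hcard
    exact_mod_cast hcard
  refine ⟨Finset.univ.biUnion fun i => Fintype.piFinset (Function.update J i (F i)), ?_, ?_⟩
  · calc _ ≤ ∑ i, (Fintype.piFinset (Function.update J i (F i))).card := Finset.card_biUnion_le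
      _ ≤ ∑ _i : Fin N, 2 * (m + 1) ^ (N - 1) := by
        gcongr with i
        rw [Fintype.card_piFinset, Fintype.prod_eq_mul_prod_compl i, Function.update_self]
        gcongr
        · exact Finset.card_le_two
        · calc _ ≤ ∏ _l ∈ {i}ᶜ, (m + 1) := Finset.prod_le_prod' fun l hl => by
                rw [Function.update_of_ne (by simpa using hl)]; exact hJ l
            _ = (m + 1) ^ (N - 1) := by simp [Finset.card_compl]
      _ = 2 * N * (m + 1) ^ (N - 1) := by simp only [Finset.sum_const, Finset.card_univ,
          Fintype.card_fin, smul_eq_mul]; ring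
  · rintro j ⟨hBx, i, hi⟩
    have hdist : ∀ l, |h * j l - z l| = |2 * r / m * j l + a l - y l| := fun l => by
      congr 1; simp only [z]; ring
    simp only [Finset.mem_biUnion, Finset.mem_univ, true_and, Fintype.mem_piFinset]
    refine ⟨i, fun l => ?_⟩
    rcases eq_or_ne l i with rfl | hl
    · rw [Function.update_self]
      have := eq_ceil_or_eq_floor_of_frame hh hεh ((hdist l).trans_le (hBx l))
        ((hdist l).symm ▸ hi)
      simpa [F] using this
    · rw [Function.update_of_ne hl, Int.mem_Icc_ceil_div_floor_div hh]
      have := abs_le.mp ((hdist l).trans_le (hBx l))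
      constructor <;> linarith

lemma tsum_measure_le_of_multiplicity {α ι : Type*} [MeasurableSpace α] [Countable ι]
    (μ : Measure α) {A : ι → Set α} (hA : ∀ i, MeasurableSet (A i)) (C : ℕ)
    (hC : ∀ x, ∃ s : Finset ι, s.card ≤ C ∧ ∀ i, x ∈ A i → i ∈ s) :
    ∑' i, μ (A i) ≤ C * μ Set.univ := by
  have hpoint : ∀ x, ∑' i, (A i).indicator 1 x ≤ (C : ℝ≥0∞) := fun x => by
    obtain ⟨s, hs, hxs⟩ := hC x
    rw [tsum_eq_sum fun i hi => Set.indicator_of_notMem (fun hx => hi (hxs i hx)) _]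
    calc ∑ i ∈ s, (A i).indicator 1 x ≤ ∑ _i ∈ s, (1 : ℝ≥0∞) := Finset.sum_le_sum fun i _ =>
          Set.indicator_apply_le' (fun _ => le_rfl) fun _ => zero_le_one
      _ ≤ C := by simpa using hs
  calc ∑' i, μ (A i) = ∫⁻ x, ∑' i, (A i).indicator 1 x ∂μ := by
        rw [lintegral_tsum fun i => (measurable_one.indicator (hA i)).aemeasurable]
        simp [lintegral_indicator_one (hA _)]
    _ ≤ ∫⁻ _, (C : ℝ≥0∞) ∂μ := lintegral_mono hpoint
    _ = C * μ Set.univ := lintegral_const _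

lemma Int.eq_and_eq_of_add_mul_eq {m k k' n n' : ℤ} (hk : 0 ≤ k ∧ k < m) (hk' : 0 ≤ k' ∧ k' < m)
    (h : k + m * n = k' + m * n') : k = k' ∧ n = n' := by
  have hn : n = n' := by
    by_contra hne
    rcases lt_or_gt_of_ne hne with hlt | hlt <;> nlinarith
  subst hn
  omega

noncomputable def fineShift {N : ℕ} (r : ℝ) (m : ℕ) (κ : Fin N → Fin m) : Fin N → ℝ :=
  fun i => 2 * r / m * (κ i : ℕ) - r

lemma fineShift_mem_Bx {N m : ℕ} {r : ℝ} (hr : 0 ≤ r) (κ : Fin N → Fin m) :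
    fineShift r m κ ∈ Bx 0 r := fun i => by
  have hκ : ((κ i : ℕ) : ℝ) ≤ m := by exact_mod_cast (κ i).isLt.le
  have hle : 2 * r / m * (κ i : ℕ) ≤ 2 * r := by
    rcases Nat.eq_zero_or_pos m with hm | hm
    · simp [hm]; positivity
    · rw [div_mul_eq_mul_div, div_le_iff₀ (by positivity)]; gcongr
  have : 0 ≤ 2 * r / m * (κ i : ℕ) := by positivity
  rw [fineShift, Pi.zero_apply, abs_le]
  constructor <;> linarith

lemma cubeCenter_fineShift {N m : ℕ} (hm : 0 < m) (r : ℝ) (κ : Fin N → Fin m)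
    (n : Fin N → ℤ) :
    cubeCenter r (fineShift r m κ) n = fun i => 2 * r / m * ((κ i : ℕ) + m * n i : ℤ) + -r := by
  ext i
  simp only [cubeCenter, fineShift]
  push_cast
  field_simp
  ring

lemma exists_shift_tsum_measure_frame_le {N m : ℕ} (μ : Measure (Fin N → ℝ))
    (U : Set (Fin N → ℝ)) {r ε : ℝ} (hr : 0 < r) (hm : 0 < m) (hmε : m * ε < 2) :
    ∃ ω ∈ Bx 0 r, (m : ℝ≥0∞) ^ N * ∑' n, μ (Fr (cubeCenter r ω n) r ε ∩ U) ≤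
      (2 * N * (m + 1) ^ (N - 1) : ℕ) * μ U := by
  classical
  set S : (Fin N → Fin m) → ℝ≥0∞ := fun κ =>
    ∑' n, μ (Fr (cubeCenter r (fineShift r m κ) n) r ε ∩ U)
  set g : (Fin N → ℤ) → ℝ≥0∞ := fun j => μ (Fr (fun i => 2 * r / m * j i + -r) r ε ∩ U)
  set φ : (Fin N → Fin m) × (Fin N → ℤ) → Fin N → ℤ := fun p i => (p.1 i : ℕ) + m * p.2 i
  have hφ : Function.Injective φ := by
    rintro ⟨κ, n⟩ ⟨κ', n'⟩ h
    have hi := fun i => Int.eq_and_eq_of_add_mul_eq (m := m) ⟨by positivity, by simp⟩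
      ⟨by positivity, by simp⟩ (congrFun h i)
    simp only [Prod.mk.injEq]
    exact ⟨funext fun i => Fin.ext (by exact_mod_cast (hi i).1), funext fun i => (hi i).2⟩
  have hsum : ∑ κ, S κ ≤ (2 * N * (m + 1) ^ (N - 1) : ℕ) * μ U :=
    calc ∑ κ, S κ = ∑' κ, ∑' n, g (φ (κ, n)) := by
          rw [← tsum_fintype (L := SummationFilter.unconditional _)]
          simp only [S, g, φ, cubeCenter_fineShift hm]
      _ = ∑' p, g (φ p) := ENNReal.tsum_prod.symm
      _ ≤ ∑' j, g j := ENNReal.tsum_comp_le_tsum_of_injective hφ g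
      _ ≤ _ := by
        simpa [g, Measure.restrict_apply (measurableSet_Fr _ _ _)] using
          tsum_measure_le_of_multiplicity (μ.restrict U) (fun j => measurableSet_Fr _ _ _) _
            (exists_finset_frame_multiplicity hr hm hmε (fun _ => -r))
  have : Nonempty (Fin N → Fin m) := ⟨fun _ => ⟨0, hm⟩⟩
  obtain ⟨κ₀, -, hmin⟩ := Finset.exists_min_image Finset.univ S Finset.univ_nonempty
  refine ⟨fineShift r m κ₀, fineShift_mem_Bx hr.le κ₀, ?_⟩
  calc (m : ℝ≥0∞) ^ N * S κ₀ = Finset.univ.card • S κ₀ := by simp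
    _ ≤ ∑ κ, S κ := Finset.card_nsmul_le_sum _ _ _ fun κ _ => hmin κ (Finset.mem_univ κ)
    _ ≤ _ := hsum

def badRegion {N : ℕ} (μ : Measure (Fin N → ℝ)) (K : Set (Fin N → ℝ)) (r ε : ℝ) (δ : ℝ≥0∞)
    (ω : Fin N → ℝ) : Set (Fin N → ℝ) :=
  ⋃ n ∈ {n | (Bx (cubeCenter r ω n) r ∩ K).Nonempty ∧
    δ * μ (Bx (cubeCenter r ω n) r) < μ (Fr (cubeCenter r ω n) r ε)}, Bx (cubeCenter r ω n) r

lemma subset_goodCubes_union_badRegion {N : ℕ} (μ : Measure (Fin N → ℝ))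
    (K : Set (Fin N → ℝ)) {r : ℝ} (hr : 0 < r) (ε : ℝ) (δ : ℝ≥0∞) (ω : Fin N → ℝ) :
    K ⊆ (⋃ c ∈ {c : Fin N → ℝ | (∃ n : Fin N → ℤ, ∀ i, c i = 2 * r * (n i) + ω i) ∧
      (Bx c r ∩ K).Nonempty ∧ μ (Fr c r ε) ≤ δ * μ (Bx c r)}, Bx c r) ∪
      badRegion μ K r ε δ ω := by
  intro y hy
  obtain ⟨n, hn⟩ := exists_mem_Bx_cubeCenter hr ω y
  by_cases hgood : μ (Fr (cubeCenter r ω n) r ε) ≤ δ * μ (Bx (cubeCenter r ω n) r)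
  · exact Or.inl (Set.mem_biUnion ⟨⟨n, fun i => rfl⟩, ⟨y, hn, hy⟩, hgood⟩ hn)
  · exact Or.inr (Set.mem_biUnion ⟨⟨y, hn, hy⟩, not_le.mp hgood⟩ hn)

lemma mul_measure_badRegion_le {N : ℕ} (μ : Measure (Fin N → ℝ)) {K U : Set (Fin N → ℝ)}
    {r : ℝ} (hfit : ∀ x : Fin N → ℝ, (Bx x r ∩ K).Nonempty → Bx x r ⊆ U) (ε : ℝ) (δ : ℝ≥0∞)
    (ω : Fin N → ℝ) :
    δ * μ (badRegion μ K r ε δ ω) ≤ ∑' n, μ (Fr (cubeCenter r ω n) r ε ∩ U) := by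
  set bad := {n | (Bx (cubeCenter r ω n) r ∩ K).Nonempty ∧
    δ * μ (Bx (cubeCenter r ω n) r) < μ (Fr (cubeCenter r ω n) r ε)}
  calc δ * μ (badRegion μ K r ε δ ω) ≤ δ * ∑' n : bad, μ (Bx (cubeCenter r ω n) r) := by
        gcongr; exact measure_biUnion_le μ bad.to_countable _
    _ = ∑' n : bad, δ * μ (Bx (cubeCenter r ω n) r) := ENNReal.tsum_mul_left.symm
    _ ≤ ∑' n : bad, μ (Fr (cubeCenter r ω n) r ε ∩ U) := by
        gcongr with n
        rw [Set.inter_eq_left.mpr fun y hy => hfit _ n.2.1 hy.1]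
        exact n.2.2.le
    _ ≤ ∑' n, μ (Fr (cubeCenter r ω n) r ε ∩ U) :=
        ENNReal.tsum_comp_le_tsum_of_injective Subtype.val_injective _

lemma twelve_mul_le_pow_mul_ofReal {N m : ℕ} {ε : ℝ} (hN : 0 < N) (hmε : 1 ≤ m * ε) :
    (12 * (2 * N * (m + 1) ^ (N - 1)) : ℕ) ≤
      (2 * m ^ N : ℕ) * ENNReal.ofReal (16 * N * 2 ^ N * ε) := by
  rw [← ENNReal.ofReal_natCast, ← ENNReal.ofReal_natCast (2 * m ^ N),
    ← ENNReal.ofReal_mul (by positivity)]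
  apply ENNReal.ofReal_le_ofReal
  obtain ⟨k, rfl⟩ : ∃ k, N = k + 1 := ⟨N - 1, by omega⟩
  have hm : (1 : ℝ) ≤ m := by
    rcases Nat.eq_zero_or_pos m with h | h
    · simp [h] at hmε; linarith
    · exact_mod_cast h
  have hpow : ((m : ℝ) + 1) ^ k ≤ 2 ^ k * m ^ k := by
    rw [← mul_pow]; gcongr; linarith
  have hmk : (m : ℝ) ^ k ≤ m ^ (k + 1) * ε := by
    rw [pow_succ, mul_assoc]; exact le_mul_of_one_le_right (by positivity) hmε
  push_cast
  calc 12 * (2 * ((k : ℝ) + 1) * (m + 1) ^ k) ≤ 24 * (k + 1) * (2 ^ k * m ^ k) := by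
        nlinarith [hpow]
    _ ≤ 24 * (k + 1) * (2 ^ k * (m ^ (k + 1) * ε)) := by gcongr
    _ ≤ 64 * (k + 1) * (2 ^ k * (m ^ (k + 1) * ε)) := by
        have : 0 ≤ (m : ℝ) ^ (k + 1) * ε := (by positivity : (0 : ℝ) ≤ m ^ k).trans hmk
        gcongr; norm_num
    _ = 2 * m ^ (k + 1) * (16 * (k + 1) * 2 ^ (k + 1) * ε) := by ring

lemma badRegion_eq_empty {N : ℕ} {μ : Measure (Fin N → ℝ)} {r ε : ℝ} {δ : ℝ≥0∞}
    (h : ∀ c, μ (Fr c r ε) ≤ δ * μ (Bx c r)) (K : Set (Fin N → ℝ)) (ω : Fin N → ℝ) :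
    badRegion μ K r ε δ ω = ∅ := by
  simp [badRegion, fun n => not_lt.mpr (h (cubeCenter r ω n))]

lemma measure_Fr_le_of_not_small {N : ℕ} (μ : Measure (Fin N → ℝ)) {r ε : ℝ}
    (h : ¬(0 < N ∧ 16 * N * 2 ^ N * ε < 1)) (c : Fin N → ℝ) :
    μ (Fr c r ε) ≤ ENNReal.ofReal (16 * N * 2 ^ N * ε) * μ (Bx c r) := by
  rcases Nat.eq_zero_or_pos N with rfl | hN
  · simp [Fr]
  · calc μ (Fr c r ε) ≤ μ (Bx c r) := measure_mono fun _ hy => hy.1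
      _ ≤ _ := le_mul_of_one_le_left zero_le (ENNReal.one_le_ofReal.mpr (not_lt.mp (h ⟨hN, ·⟩)))

lemma exists_nat_one_le_mul_lt_two {ε : ℝ} (hε : 0 < ε) (hε1 : ε < 1) :
    ∃ m : ℕ, 0 < m ∧ 1 ≤ m * ε ∧ m * ε < 2 := by
  refine ⟨⌈1 / ε⌉₊, Nat.ceil_pos.mpr (by positivity), ?_, ?_⟩
  · rw [← div_le_iff₀ hε]; exact Nat.le_ceil _
  · calc ⌈1 / ε⌉₊ * ε < (1 / ε + 1) * ε := by gcongr; exact Nat.ceil_lt_add_one (by positivity)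
      _ < 2 := by field_simp; linarith

lemma exists_shift_four_mul_measure_badRegion_le {N : ℕ} (μ : Measure (Fin N → ℝ))
    {K U : Set (Fin N → ℝ)} (hμU : μ U ≤ 3 / 2 * μ K) {r : ℝ} (hr : 0 < r)
    (hfit : ∀ x : Fin N → ℝ, (Bx x r ∩ K).Nonempty → Bx x r ⊆ U) {ε : ℝ} (hε : 0 < ε) :
    ∃ ω ∈ Bx 0 r, 4 * μ (badRegion μ K r ε (ENNReal.ofReal (16 * N * 2 ^ N * ε)) ω) ≤ μ K := by
  set δ := ENNReal.ofReal (16 * N * 2 ^ N * ε)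
  by_cases hsmall : 0 < N ∧ 16 * N * 2 ^ N * ε < 1
  swap
  · refine ⟨0, fun i => by simpa using hr.le, ?_⟩
    rw [badRegion_eq_empty (measure_Fr_le_of_not_small μ hsmall)]
    simp
  obtain ⟨hN, hsmall⟩ := hsmall
  have hε1 : ε < 1 := by
    have h16 : (1 : ℝ) ≤ 16 * N * 2 ^ N := by
      have : (1 : ℝ) ≤ N := by exact_mod_cast hN
      nlinarith [one_le_pow₀ (M₀ := ℝ) (a := 2) one_le_two (n := N)]
    nlinarith
  obtain ⟨m, hm, hmε, hmε2⟩ := exists_nat_one_le_mul_lt_two hε hε1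
  obtain ⟨ω, hω, hsum⟩ := exists_shift_tsum_measure_frame_le μ U hr hm hmε2
  refine ⟨ω, hω, ?_⟩
  set C : ℕ := 2 * N * (m + 1) ^ (N - 1)
  have hC : (3 * C : ℝ≥0∞) ≠ 0 := by simp [C, hN.ne', hm.ne']
  refine (ENNReal.mul_le_mul_iff_right hC (by finiteness)).mp ?_
  calc 3 * C * (4 * μ (badRegion μ K r ε δ ω))
      = ((12 * C : ℕ) : ℝ≥0∞) * μ (badRegion μ K r ε δ ω) := by push_cast; ring
    _ ≤ (2 * m ^ N : ℕ) * δ * μ (badRegion μ K r ε δ ω) := by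
        gcongr; exact twelve_mul_le_pow_mul_ofReal hN hmε
    _ = 2 * (m ^ N * (δ * μ (badRegion μ K r ε δ ω))) := by push_cast; ring
    _ ≤ 2 * (m ^ N * ∑' n, μ (Fr (cubeCenter r ω n) r ε ∩ U)) := by
        gcongr; exact mul_measure_badRegion_le μ hfit ε δ ω
    _ ≤ 2 * (C * μ U) := by gcongr
    _ ≤ 2 * (C * (3 / 2 * μ K)) := by gcongr
    _ = 3 * C * μ K := by
        rw [mul_left_comm, ← mul_assoc 2, ENNReal.mul_div_cancel two_ne_zero ENNReal.ofNat_ne_top]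
        ring

lemma three_quarters_le_measure_inter {α : Type*} [MeasurableSpace α] (μ : Measure α)
    {K G B : Set α} (hK : μ K ≠ ⊤) (hcov : K ⊆ G ∪ B) (hB : 4 * μ B ≤ μ K) :
    3 / 4 * μ K ≤ μ (K ∩ G) := by
  have hle : μ K ≤ μ (K ∩ G) + μ B :=
    (measure_mono fun x hx => (hcov hx).imp (fun hG => ⟨hx, hG⟩) id).trans (measure_union_le _ _)
  have h3 : 3 * μ K ≤ 4 * μ (K ∩ G) := by
    refine (ENNReal.add_le_add_iff_right hK).mp ?_
    calc 3 * μ K + μ K = 4 * μ K := by ring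
      _ ≤ 4 * (μ (K ∩ G) + μ B) := by gcongr
      _ = 4 * μ (K ∩ G) + 4 * μ B := mul_add _ _ _
      _ ≤ 4 * μ (K ∩ G) + μ K := by gcongr
  rw [← ENNReal.mul_div_right_comm]
  exact ENNReal.div_le_of_le_mul' h3

theorem stmt_3 {N : ℕ} (μ : Measure (Fin N → ℝ)) [IsLocallyFiniteMeasure μ]
    (K U : Set (Fin N → ℝ)) (hK : IsCompact K)
    (hμU : μ U ≤ 3 / 2 * μ K)
    (r : ℝ) (hr : 0 < r)
    (hfit : ∀ x : Fin N → ℝ, (Bx x r ∩ K).Nonempty → Bx x r ⊆ U)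
    (ε : ℝ) (hε : 0 < ε) :
    ∃ ω ∈ Bx (0 : Fin N → ℝ) r,
      3 / 4 * μ K ≤
        μ (K ∩ ⋃ c ∈ {c : Fin N → ℝ |
            (∃ n : Fin N → ℤ, ∀ i, c i = 2 * r * (n i) + ω i) ∧
            (Bx c r ∩ K).Nonempty ∧
            μ (Fr c r ε) ≤ ENNReal.ofReal (16 * N * 2 ^ N * ε) * μ (Bx c r)},
          Bx c r) := by
  obtain ⟨ω, hω, hbad⟩ := exists_shift_four_mul_measure_badRegion_le μ hμU hr hfit hε
  exact ⟨ω, hω, three_quarters_le_measure_inter μ hK.measure_lt_top.ne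
    (subset_goodCubes_union_badRegion μ K hr ε _ ω) hbad⟩
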